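/- Suppose ψ₀, ψ₁, …, ψ_m : [0,∞) → ℝ are continuously differentiable and satisfy ψᵢ(t) = ψ̇_{i-1}(t) + p·ψ_{i-1}(t) for i = 1,…,m with p > 0. If ψᵢ(0) ≥ 0 for all i ∈ {0,…,m−1} and ψ_m(t) ≥ 0 for all t ≥ 0, then ψᵢ(t) ≥ 0 for all t ≥ 0 and all i ∈ {0,…,m−1}; in particular ψ₀(t) = b(t) ≥ 0 for all t ≥ 0. -/

import Mathlib

/-! The integrating factor `e^{pt}` turns `ψ_{i+1} = ψ̇ᵢ + p ψᵢ` into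
`d/dt (e^{pt} ψᵢ(t)) = e^{pt} ψ_{i+1}(t)`. So if `ψ_{i+1} ≥ 0` on `[0, ∞)`, then `e^{pt} ψᵢ(t)` is
nondecreasing there and `ψᵢ(t) ≥ e^{-pt} ψᵢ(0) ≥ 0`. Descending from `i = m - 1` to `i = 0`
gives the claim. -/

open Real Set

theorem hasDerivAt_exp_mul_mul {f : ℝ → ℝ} {f' x : ℝ} (p : ℝ) (hf : HasDerivAt f f' x) :
    HasDerivAt (fun t => exp (p * t) * f t) (exp (p * x) * (f' + p * f x)) x := by
  have hexp : HasDerivAt (fun t => exp (p * t)) (exp (p * x) * p) x :=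
    ((hasDerivAt_id' x).const_mul p).exp.congr_deriv (by ring)
  exact (hexp.mul hf).congr_deriv (by ring)

theorem monotoneOn_exp_mul_mul {f : ℝ → ℝ} {p : ℝ} (hf : Differentiable ℝ f)
    (hd : ∀ t, 0 ≤ t → 0 ≤ deriv f t + p * f t) :
    MonotoneOn (fun t => exp (p * t) * f t) (Ici 0) := by
  have hderiv (t : ℝ) := hasDerivAt_exp_mul_mul p (hf t).hasDerivAt
  refine monotoneOn_of_deriv_nonneg (convex_Ici 0) ?_ ?_ ?_
  · exact fun t _ => (hderiv t).continuousAt.continuousWithinAt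
  · exact fun t _ => (hderiv t).differentiableAt.differentiableWithinAt
  · intro t ht
    rw [interior_Ici] at ht
    rw [(hderiv t).deriv]
    exact mul_nonneg (exp_pos _).le (hd t (le_of_lt ht))

theorem nonneg_of_deriv_add_mul_nonneg {f : ℝ → ℝ} {p : ℝ} (hf : Differentiable ℝ f)
    (h0 : 0 ≤ f 0) (hd : ∀ t, 0 ≤ t → 0 ≤ deriv f t + p * f t) (t : ℝ) (ht : 0 ≤ t) :
    0 ≤ f t := by
  have hmono := monotoneOn_exp_mul_mul hf hd self_mem_Ici ht ht
  simp only [mul_zero, exp_zero, one_mul] at hmono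
  exact nonneg_of_mul_nonneg_right (h0.trans hmono) (exp_pos _)

theorem hocbf_chain_invariance_general (m : ℕ) (ψ : ℕ → ℝ → ℝ) (p : ℝ)
    (hsmooth : ∀ i ≤ m, ContDiff ℝ 1 (ψ i))
    (hrec : ∀ i < m, ∀ t : ℝ, ψ (i + 1) t = deriv (ψ i) t + p * ψ i t)
    (h0 : ∀ i < m, 0 ≤ ψ i 0)
    (hm : ∀ t : ℝ, 0 ≤ t → 0 ≤ ψ m t) :
    ∀ i < m, ∀ t : ℝ, 0 ≤ t → 0 ≤ ψ i t := by
  suffices h : ∀ i ≤ m, ∀ t : ℝ, 0 ≤ t → 0 ≤ ψ i t from fun i hi => h i hi.le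
  intro _ hi
  induction hi using Nat.decreasingInduction with
  | self => exact hm
  | of_succ i hi hnext =>
    exact nonneg_of_deriv_add_mul_nonneg ((hsmooth i hi.le).differentiable one_ne_zero)
      (h0 i hi) fun t ht => hrec i hi t ▸ hnext t ht

/-- HOCBF forward invariance along a trajectory with linear class K functions:
if `ψ_{i+1} = ψ̇ᵢ + p·ψᵢ`, `ψᵢ(0) ≥ 0` for `i < m`, and `ψ_m(t) ≥ 0` for all
`t ≥ 0`, then `ψᵢ(t) ≥ 0` for all `t ≥ 0` and all `i < m`; in particular
`ψ₀ = b` stays nonnegative. -/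
theorem hocbf_chain_invariance (m : ℕ) (ψ : ℕ → ℝ → ℝ) (p : ℝ) (hp : 0 < p)
    (hsmooth : ∀ i ≤ m, ContDiff ℝ 1 (ψ i))
    (hrec : ∀ i < m, ∀ t : ℝ, ψ (i + 1) t = deriv (ψ i) t + p * ψ i t)
    (h0 : ∀ i < m, 0 ≤ ψ i 0)
    (hm : ∀ t : ℝ, 0 ≤ t → 0 ≤ ψ m t) :
    ∀ i < m, ∀ t : ℝ, 0 ≤ t → 0 ≤ ψ i t :=
  hocbf_chain_invariance_general m ψ p hsmooth hrec h0 hm
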